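/- arXiv:1303.6943 — 3 statements merged into one kernel-verified Lean document; each statement's English description precedes it below -/
import Mathlib

section
/- Let F be the Feynman–Kac operator associated with the path measures (μ_x), the rate function c and the initial function g. Then for every T₀ ∈ (0,T], every t ∈ [0,T₀], every x ∈ E, and all bounded measurable functions u, v : [0,T₀]×E → ℝ, one has |F[u](t,x) − F[v](t,x)| ≤ ‖g‖ · e^{c₀T₀} · Lip(c) · T₀ · sup_{(s,y)∈[0,T₀]×E} |u(s,y) − v(s,y)|. In particular, F is a contraction on the space of bounded measurable functions on [0,T₀]×E with the sup norm whenever ‖g‖ · Lip(c) · T₀ · e^{c₀T₀} < 1. -/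
/-!
For each path `ω` the exponents `∫₀ᵗ c(u(t−s, ω(s))) ds` and `∫₀ᵗ c(v(t−s, ω(s))) ds` are at most
`c₀ t`, and by the Lipschitz bound on `c` they differ by at most `Lip(c) · t · sup |u − v|`.
On `(-∞, c₀ t]` the exponential is `e^{c₀ t}`-Lipschitz, so the two integrands differ by at most
`‖g‖ e^{c₀ t} Lip(c) t sup |u − v|` pointwise; integrating against the probability measure `μ_x`
gives the estimate.
-/

open MeasureTheory Set Filter

open scoped Interval

/-- The Feynman–Kac operator `F[v](t,x) = ∫ exp(∫₀ᵗ c(v(t−s, ω(s))) ds) · g(ω(t)) dμ_x(ω)`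
on the space of continuous paths `ω : [0,T] → E`. -/
noncomputable def FeynmanKac {E : Type*} [TopologicalSpace E] [MeasurableSpace E]
    {T : ℝ} (hT : 0 ≤ T) [MeasurableSpace C(Set.Icc (0:ℝ) T, E)]
    (μ : E → Measure C(Set.Icc (0:ℝ) T, E))
    (c : ℝ → ℝ) (g : E → ℝ) (v : ℝ → E → ℝ) (t : ℝ) (x : E) : ℝ :=
  ∫ ω, Real.exp (∫ s in (0:ℝ)..t, c (v (t - s) (ω (Set.projIcc 0 T hT s))))
      * g (ω (Set.projIcc 0 T hT t)) ∂(μ x)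

theorem Real.abs_exp_sub_exp_le_of_le {a b C : ℝ} (ha : a ≤ C) (hb : b ≤ C) :
    |Real.exp a - Real.exp b| ≤ Real.exp C * |a - b| := by
  have hderiv : ∀ x ∈ Iic C, ‖deriv Real.exp x‖ ≤ Real.exp C := fun x hx => by
    rw [Real.deriv_exp, Real.norm_eq_abs, Real.abs_exp]
    exact Real.exp_le_exp.2 hx
  simpa only [Real.norm_eq_abs] using
    (convex_Iic C).norm_image_sub_le_of_norm_deriv_le
      (fun x _ => Real.differentiableAt_exp) hderiv hb ha

theorem LipschitzWith.abs_intervalIntegral_comp_sub_le {c : ℝ → ℝ} {K : NNReal}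
    (hc : LipschitzWith K c) {f g : ℝ → ℝ} {a b M : ℝ}
    (hf : IntervalIntegrable (fun s => c (f s)) volume a b)
    (hg : IntervalIntegrable (fun s => c (g s)) volume a b)
    (hfg : ∀ s ∈ Ι a b, |f s - g s| ≤ M) :
    |(∫ s in a..b, c (f s)) - ∫ s in a..b, c (g s)| ≤ K * M * |b - a| := by
  rw [← intervalIntegral.integral_sub hf hg, ← Real.norm_eq_abs]
  refine intervalIntegral.norm_integral_le_of_norm_le_const fun s hs => ?_
  calc ‖c (f s) - c (g s)‖ ≤ K * ‖f s - g s‖ := by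
        simpa only [dist_eq_norm] using hc.dist_le_mul (f s) (g s)
    _ ≤ K * M := mul_le_mul_of_nonneg_left (hfg s hs) K.coe_nonneg

section FeynmanKac

variable {E : Type*} [TopologicalSpace E] {T : ℝ} (hT : 0 ≤ T)
  {c : ℝ → ℝ} {g : E → ℝ} {w : ℝ → E → ℝ} {t : ℝ}

noncomputable def feynmanKacExponent (c : ℝ → ℝ) (w : ℝ → E → ℝ) (t : ℝ)
    (ω : C(Icc (0:ℝ) T, E)) : ℝ :=
  ∫ s in (0:ℝ)..t, c (w (t - s) (ω (projIcc 0 T hT s)))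

noncomputable def feynmanKacIntegrand (c : ℝ → ℝ) (g : E → ℝ) (w : ℝ → E → ℝ) (t : ℝ)
    (ω : C(Icc (0:ℝ) T, E)) : ℝ :=
  Real.exp (feynmanKacExponent hT c w t ω) * g (ω (projIcc 0 T hT t))

theorem feynmanKac_eq_integral [MeasurableSpace E] [MeasurableSpace C(Icc (0:ℝ) T, E)]
    (μ : E → Measure C(Icc (0:ℝ) T, E)) (x : E) :
    FeynmanKac hT μ c g w t x = ∫ ω, feynmanKacIntegrand hT c g w t ω ∂(μ x) :=
  rfl

theorem feynmanKacExponent_le {c₀ : ℝ} (hc₀ : ∀ u, |c u| ≤ c₀) (ht : 0 ≤ t)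
    (ω : C(Icc (0:ℝ) T, E)) : feynmanKacExponent hT c w t ω ≤ c₀ * t := by
  have := intervalIntegral.norm_integral_le_of_norm_le_const (a := 0) (b := t)
    (f := fun s => c (w (t - s) (ω (projIcc 0 T hT s)))) fun s _ => hc₀ _
  rw [sub_zero, abs_of_nonneg ht, Real.norm_eq_abs] at this
  exact (le_abs_self _).trans this

theorem abs_feynmanKacIntegrand_le {c₀ G : ℝ} (hc₀ : ∀ u, |c u| ≤ c₀) (hG : ∀ y, |g y| ≤ G)
    (ht : 0 ≤ t) (ω : C(Icc (0:ℝ) T, E)) :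
    |feynmanKacIntegrand hT c g w t ω| ≤ Real.exp (c₀ * t) * G := by
  rw [feynmanKacIntegrand, abs_mul, Real.abs_exp]
  exact mul_le_mul (Real.exp_le_exp.2 (feynmanKacExponent_le hT hc₀ ht ω)) (hG _)
    (abs_nonneg _) (Real.exp_pos _).le

variable [MeasurableSpace E] [BorelSpace E] [MeasurableSpace C(Icc (0:ℝ) T, E)]
  [OpensMeasurableSpace C(Icc (0:ℝ) T, E)]

theorem measurable_feynmanKac_rate (hc : Measurable c) (hw : Measurable (Function.uncurry w)) :
    Measurable fun p : C(Icc (0:ℝ) T, E) × ℝ => c (w (t - p.2) (p.1 (projIcc 0 T hT p.2))) := by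
  have heval : Continuous fun p : C(Icc (0:ℝ) T, E) × ℝ => p.1 (projIcc 0 T hT p.2) :=
    continuous_eval.comp
      (continuous_fst.prodMk ((continuous_projIcc (h := hT)).comp continuous_snd))
  exact hc.comp (hw.comp ((measurable_const.sub measurable_snd).prodMk heval.measurable))

theorem measurable_feynmanKacExponent (hc : Measurable c)
    (hw : Measurable (Function.uncurry w)) :
    Measurable (feynmanKacExponent hT c w t) := by
  have hI : ∀ a b : ℝ, Measurable fun ω : C(Icc (0:ℝ) T, E) =>
      ∫ s in Ioc a b, c (w (t - s) (ω (projIcc 0 T hT s))) := fun _ _ =>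
    (measurable_feynmanKac_rate hT hc hw).stronglyMeasurable.integral_prod_right'.measurable
  exact (hI 0 t).sub (hI t 0)

theorem measurable_feynmanKacIntegrand (hc : Measurable c)
    (hw : Measurable (Function.uncurry w)) (hg : Measurable g) :
    Measurable (feynmanKacIntegrand hT c g w t) :=
  (Real.measurable_exp.comp (measurable_feynmanKacExponent hT hc hw)).mul
    (hg.comp (continuous_eval_const _).measurable)

theorem intervalIntegrable_feynmanKac_rate {c₀ : ℝ} (hc : Measurable c) (hc₀ : ∀ u, |c u| ≤ c₀)
    (hw : Measurable (Function.uncurry w)) (ω : C(Icc (0:ℝ) T, E)) :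
    IntervalIntegrable (fun s => c (w (t - s) (ω (projIcc 0 T hT s)))) volume 0 t :=
  IntervalIntegrable.mono_fun' intervalIntegrable_const
    ((measurable_feynmanKac_rate hT hc hw).comp measurable_prodMk_left).aestronglyMeasurable
    (ae_of_all _ fun _ => hc₀ _)

theorem abs_feynmanKacExponent_sub_le {K : NNReal} (hc : LipschitzWith K c) {c₀ : ℝ}
    (hc₀ : ∀ u, |c u| ≤ c₀) {u v : ℝ → E → ℝ} (hu : Measurable (Function.uncurry u))
    (hv : Measurable (Function.uncurry v)) {M : ℝ}
    (hM : ∀ s ∈ Icc (0:ℝ) t, ∀ y, |u s y - v s y| ≤ M) (ht : 0 ≤ t) (ω : C(Icc (0:ℝ) T, E)) :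
    |feynmanKacExponent hT c u t ω - feynmanKacExponent hT c v t ω| ≤ K * M * t := by
  have := hc.abs_intervalIntegral_comp_sub_le
    (intervalIntegrable_feynmanKac_rate hT hc.continuous.measurable hc₀ hu ω)
    (intervalIntegrable_feynmanKac_rate hT hc.continuous.measurable hc₀ hv ω)
    fun s hs => by
      rw [uIoc_of_le ht] at hs
      exact hM _ ⟨by linarith [hs.2], by linarith [hs.1]⟩ _
  rwa [sub_zero, abs_of_nonneg ht] at this

theorem abs_feynmanKacIntegrand_sub_le {K : NNReal} (hc : LipschitzWith K c) {c₀ G : ℝ}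
    (hc₀ : ∀ u, |c u| ≤ c₀) (hG : ∀ y, |g y| ≤ G) {u v : ℝ → E → ℝ}
    (hu : Measurable (Function.uncurry u)) (hv : Measurable (Function.uncurry v)) {M : ℝ}
    (hM : ∀ s ∈ Icc (0:ℝ) t, ∀ y, |u s y - v s y| ≤ M) (ht : 0 ≤ t) (ω : C(Icc (0:ℝ) T, E)) :
    |feynmanKacIntegrand hT c g u t ω - feynmanKacIntegrand hT c g v t ω|
      ≤ Real.exp (c₀ * t) * (K * M * t) * G := by
  have hexp := (Real.abs_exp_sub_exp_le_of_le (feynmanKacExponent_le hT hc₀ ht ω)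
    (feynmanKacExponent_le hT hc₀ ht ω)).trans (mul_le_mul_of_nonneg_left
      (abs_feynmanKacExponent_sub_le hT hc hc₀ hu hv hM ht ω) (Real.exp_pos _).le)
  rw [feynmanKacIntegrand, feynmanKacIntegrand, ← sub_mul, abs_mul]
  exact mul_le_mul hexp (hG _) (abs_nonneg _) ((abs_nonneg _).trans hexp)

theorem integrable_feynmanKacIntegrand {μ : Measure C(Icc (0:ℝ) T, E)} [IsFiniteMeasure μ]
    (hc : Measurable c) {c₀ G : ℝ} (hc₀ : ∀ u, |c u| ≤ c₀) (hg : Measurable g)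
    (hG : ∀ y, |g y| ≤ G) (hw : Measurable (Function.uncurry w)) (ht : 0 ≤ t) :
    Integrable (feynmanKacIntegrand hT c g w t) μ :=
  .of_bound (measurable_feynmanKacIntegrand hT hc hw hg).aestronglyMeasurable _
    (ae_of_all _ (abs_feynmanKacIntegrand_le hT hc₀ hG ht))

end FeynmanKac

theorem feynmanKac_contraction_general
    {E : Type*} [MetricSpace E] [MeasurableSpace E] [BorelSpace E]
    {T : ℝ} (hT : 0 < T)
    [MeasurableSpace C(Set.Icc (0:ℝ) T, E)] [BorelSpace C(Set.Icc (0:ℝ) T, E)]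
    (μ : E → Measure C(Set.Icc (0:ℝ) T, E))
    (hμ : ∀ x, IsProbabilityMeasure (μ x))
    (c : ℝ → ℝ) (Lc : NNReal) (hc : LipschitzWith Lc c)
    (c₀ : ℝ) (hc₀ : ∀ u : ℝ, 0 ≤ c u ∧ c u ≤ c₀)
    (g : E → ℝ) (hgm : Measurable g) (G : ℝ) (hG : ∀ x, |g x| ≤ G)
    (T₀ : ℝ)
    (u v : ℝ → E → ℝ)
    (hum : Measurable (Function.uncurry u)) (hvm : Measurable (Function.uncurry v))
    (M : ℝ) (hM : ∀ s ∈ Set.Icc (0:ℝ) T₀, ∀ y : E, |u s y - v s y| ≤ M)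
    (t : ℝ) (ht : t ∈ Set.Icc (0:ℝ) T₀) (x : E) :
    |FeynmanKac hT.le μ c g u t x - FeynmanKac hT.le μ c g v t x|
      ≤ G * Real.exp (c₀ * T₀) * (Lc : ℝ) * T₀ * M := by
  have := hμ x
  obtain ⟨ht0, htT₀⟩ := ht
  have hcb : ∀ u, |c u| ≤ c₀ := fun u => (abs_of_nonneg (hc₀ u).1).trans_le (hc₀ u).2
  have hcm := hc.continuous.measurable
  have hpointwise : ∀ ω, ‖feynmanKacIntegrand hT.le c g u t ω - feynmanKacIntegrand hT.le c g v t ω‖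
      ≤ Real.exp (c₀ * t) * (Lc * M * t) * G := abs_feynmanKacIntegrand_sub_le hT.le hc hcb hG hum
    hvm (fun s hs => hM s (Icc_subset_Icc_right htT₀ hs)) ht0
  have hc₀0 : 0 ≤ c₀ := (abs_nonneg _).trans (hcb 0)
  have hM0 : 0 ≤ M := (abs_nonneg _).trans (hM t ⟨ht0, htT₀⟩ x)
  have hG0 : 0 ≤ G := (abs_nonneg _).trans (hG x)
  rw [feynmanKac_eq_integral, feynmanKac_eq_integral, ← Real.norm_eq_abs,
    ← integral_sub (integrable_feynmanKacIntegrand hT.le hcm hcb hgm hG hum ht0)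
      (integrable_feynmanKacIntegrand hT.le hcm hcb hgm hG hvm ht0)]
  calc _ ≤ Real.exp (c₀ * t) * (Lc * M * t) * G * (μ x).real univ :=
        norm_integral_le_of_norm_le_const (ae_of_all _ hpointwise)
    _ = G * Real.exp (c₀ * t) * Lc * t * M := by rw [probReal_univ]; ring
    _ ≤ G * Real.exp (c₀ * T₀) * Lc * T₀ * M := by gcongr

/-- The basic contraction estimate for the Feynman–Kac operator:
`|F[u](t,x) − F[v](t,x)| ≤ ‖g‖ e^{c₀T₀} Lip(c) T₀ sup|u−v|`. -/
theorem feynmanKac_contraction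
    {E : Type*} [MetricSpace E] [PolishSpace E] [MeasurableSpace E] [BorelSpace E]
    {T : ℝ} (hT : 0 < T)
    [MeasurableSpace C(Set.Icc (0:ℝ) T, E)] [BorelSpace C(Set.Icc (0:ℝ) T, E)]
    (μ : E → Measure C(Set.Icc (0:ℝ) T, E)) (hμmeas : Measurable μ)
    (hμ : ∀ x, IsProbabilityMeasure (μ x))
    (c : ℝ → ℝ) (Lc : NNReal) (hc : LipschitzWith Lc c)
    (c₀ : ℝ) (hc₀ : ∀ u : ℝ, 0 ≤ c u ∧ c u ≤ c₀)
    (g : E → ℝ) (hgm : Measurable g) (G : ℝ) (hG : ∀ x, |g x| ≤ G)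
    (T₀ : ℝ) (hT₀ : 0 < T₀) (hT₀T : T₀ ≤ T)
    (u v : ℝ → E → ℝ)
    (hum : Measurable (Function.uncurry u)) (hvm : Measurable (Function.uncurry v))
    (Cu : ℝ) (hub : ∀ s y, |u s y| ≤ Cu) (Cv : ℝ) (hvb : ∀ s y, |v s y| ≤ Cv)
    (M : ℝ) (hM : ∀ s ∈ Set.Icc (0:ℝ) T₀, ∀ y : E, |u s y - v s y| ≤ M)
    (t : ℝ) (ht : t ∈ Set.Icc (0:ℝ) T₀) (x : E) :
    |FeynmanKac hT.le μ c g u t x - FeynmanKac hT.le μ c g v t x|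
      ≤ G * Real.exp (c₀ * T₀) * (Lc : ℝ) * T₀ * M :=
  feynmanKac_contraction_general hT μ hμ c Lc hc c₀ hc₀ g hgm G hG T₀ u v hum hvm M hM t ht x
end

section
/- For every λ ∈ ℝ, the function x ↦ u(x,λ) = Σ_{n≥0} λⁿ u⁽ⁿ⁾(x) is continuously differentiable on [0,r] with l(x) · ∂ₓu(x,λ) = Σ_{n≥0} λ^{n+1} ∫₀ˣ 2 l(y) u⁽ⁿ⁾(y) dy. Moreover x ↦ l(x) · ∂ₓu(x,λ) is differentiable on (0,r) with derivative 2λ l(x) u(x,λ); in particular u(·,λ) solves the Sturm–Liouville equation (l u')' = 2λ l u with u(0,λ) = 1 and l(0)·∂ₓu(0,λ) = 0. -/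
/-!
By induction `|u⁽ⁿ⁾(x)| ≤ (2l̄/ℓ)ⁿ x²ⁿ / (2n)!`, so on `[0,r]` the terms of both series are
dominated by multiples of `(|λ| q)ⁿ / n!` with `q = 2l̄r²/ℓ`. Dominated convergence then allows
term-by-term integration, which turns the recursion for the iterates into the integral equations
`u = 1 + ∫₀ˣ l⁻¹ G` and `G = ∫₀ˣ 2λ l u` for `G(x) = Σ λⁿ⁺¹ ∫₀ˣ 2 l u⁽ⁿ⁾`. Both claimed derivatives
then come from the fundamental theorem of calculus, and the initial values from `∫₀⁰ = 0`.
-/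

open MeasureTheory Set Filter
open scoped Interval Nat Topology

/-- The Feller iterates `u⁽⁰⁾ = 1`,
`u⁽ⁿ⁺¹⁾(x) = ∫₀ˣ (1/l(y)) (∫₀ʸ 2 l(s) u⁽ⁿ⁾(s) ds) dy`, associated with the generalized
operator `D_m D_p` with speed measure `dm = 2l(x)dx` and scale `dp = dx/l(x)`. -/
noncomputable def fellerIterate (l : ℝ → ℝ) : ℕ → ℝ → ℝ
  | 0, _ => 1
  | n + 1, x => ∫ y in (0:ℝ)..x, (l y)⁻¹ * ∫ s in (0:ℝ)..y, 2 * l s * fellerIterate l n s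

theorem ContinuousOn.hasDerivWithinAt_integral_Icc {E : Type*} [NormedAddCommGroup E]
    [NormedSpace ℝ E] [CompleteSpace E] {f : ℝ → E} {a b x : ℝ}
    (hf : ContinuousOn f (Icc a b)) (hx : x ∈ Icc a b) :
    HasDerivWithinAt (fun u => ∫ y in a..u, f y) (f x) (Icc a b) x := by
  have : Fact (x ∈ Icc a b) := ⟨hx⟩
  refine intervalIntegral.integral_hasDerivWithinAt_right ?_
    (hf.stronglyMeasurableAtFilter_nhdsWithin measurableSet_Icc x) (hf x hx)
  exact (hf.mono (uIcc_subset_Icc (left_mem_Icc.2 (hx.1.trans hx.2)) hx)).intervalIntegrable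

theorem ContinuousOn.continuousOn_integral_Icc {E : Type*} [NormedAddCommGroup E]
    [NormedSpace ℝ E] [CompleteSpace E] {f : ℝ → E} {a b : ℝ}
    (hf : ContinuousOn f (Icc a b)) : ContinuousOn (fun u => ∫ y in a..u, f y) (Icc a b) :=
  fun _ hx => (hf.hasDerivWithinAt_integral_Icc hx).continuousWithinAt

theorem abs_intervalIntegral_le_mul_pow_div_factorial {f : ℝ → ℝ} {A x : ℝ} {n : ℕ}
    (hx : 0 ≤ x) (hf : ∀ t ∈ Ioc 0 x, |f t| ≤ A * t ^ n / n !) :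
    |∫ t in 0..x, f t| ≤ A * x ^ (n + 1) / (n + 1)! := by
  calc |∫ t in 0..x, f t| ≤ ∫ t in 0..x, A * t ^ n / n ! := by
        rw [← Real.norm_eq_abs]
        exact intervalIntegral.norm_integral_le_of_norm_le hx (ae_of_all _ hf)
          ((by fun_prop : Continuous fun t : ℝ => A * t ^ n / n !).intervalIntegrable _ _)
    _ = A * x ^ (n + 1) / (n + 1)! := by
        rw [intervalIntegral.integral_div, intervalIntegral.integral_const_mul, integral_pow,
          Nat.factorial_succ]
        push_cast
        field_simp
        ring

theorem hasSum_intervalIntegral_of_norm_le {E : Type*} [NormedAddCommGroup E]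
    [NormedSpace ℝ E] [CompleteSpace E] {f : ℕ → ℝ → E} {bound : ℕ → ℝ} {s : Set ℝ} {a b : ℝ}
    (hab : uIcc a b ⊆ s) (hf : ∀ n, ContinuousOn (f n) s) (hbound : Summable bound)
    (hfb : ∀ n, ∀ x ∈ s, ‖f n x‖ ≤ bound n) :
    HasSum (fun n => ∫ x in a..b, f n x) (∫ x in a..b, ∑' n, f n x) := by
  have hsub : Ι a b ⊆ s := uIoc_subset_uIcc.trans hab
  refine intervalIntegral.hasSum_integral_of_dominated_convergence (fun n _ => bound n)
    (fun n => ((hf n).mono hsub).aestronglyMeasurable measurableSet_uIoc)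
    (fun n => ae_of_all _ fun x hx => hfb n x (hsub hx)) (ae_of_all _ fun _ _ => hbound)
    intervalIntegrable_const (ae_of_all _ fun x hx => ?_)
  exact (Summable.of_norm_bounded hbound fun n => hfb n x (hsub hx)).hasSum

theorem mul_pow_div_factorial_le {C x r : ℝ} {k m : ℕ} (hC : 0 ≤ C) (hx : x ∈ Icc 0 r)
    (hmk : m ≤ k) : C * x ^ k / k ! ≤ C * r ^ k / m ! := by
  have : 0 ≤ r := hx.1.trans hx.2
  gcongr
  exacts [hx.1, hx.2]

theorem norm_pow_mul_le {lam b C q : ℝ} {n : ℕ} (hb : |b| ≤ C * (q ^ n / n !)) :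
    ‖lam ^ n * b‖ ≤ C * ((|lam| * q) ^ n / n !) :=
  calc ‖lam ^ n * b‖ = |lam| ^ n * |b| := by
        rw [norm_mul, norm_pow, Real.norm_eq_abs, Real.norm_eq_abs]
    _ ≤ |lam| ^ n * (C * (q ^ n / n !)) := by gcongr
    _ = C * ((|lam| * q) ^ n / n !) := by ring

-- The inner integral of the recursion, i.e. `l · (u⁽ⁿ⁺¹⁾)'`.
noncomputable def fellerFlux (l : ℝ → ℝ) (n : ℕ) (x : ℝ) : ℝ :=
  ∫ y in (0:ℝ)..x, 2 * l y * fellerIterate l n y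

theorem fellerIterate_succ (l : ℝ → ℝ) (n : ℕ) (x : ℝ) :
    fellerIterate l (n + 1) x = ∫ y in (0:ℝ)..x, (l y)⁻¹ * fellerFlux l n y :=
  rfl

noncomputable def fellerSeries (l : ℝ → ℝ) (lam x : ℝ) : ℝ :=
  ∑' n : ℕ, lam ^ n * fellerIterate l n x

noncomputable def fellerFluxSeries (l : ℝ → ℝ) (lam x : ℝ) : ℝ :=
  ∑' n : ℕ, lam ^ (n + 1) * fellerFlux l n x

section Feller

variable {r lo hi : ℝ} {l : ℝ → ℝ}

theorem ne_zero_of_pos_le (hlo : 0 < lo) (hbd : ∀ x ∈ Icc (0:ℝ) r, lo ≤ l x ∧ l x ≤ hi) :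
    ∀ x ∈ Icc (0:ℝ) r, l x ≠ 0 :=
  fun x hx => (hlo.trans_le (hbd x hx).1).ne'

theorem continuousOn_fellerFlux_of_continuousOn {n : ℕ} (hl : ContinuousOn l (Icc 0 r))
    (hu : ContinuousOn (fellerIterate l n) (Icc 0 r)) :
    ContinuousOn (fellerFlux l n) (Icc 0 r) :=
  ((continuousOn_const.mul hl).mul hu).continuousOn_integral_Icc

theorem continuousOn_fellerIterate (hl : ContinuousOn l (Icc 0 r))
    (hl0 : ∀ x ∈ Icc 0 r, l x ≠ 0) (n : ℕ) : ContinuousOn (fellerIterate l n) (Icc 0 r) := by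
  induction n with
  | zero => exact continuousOn_const
  | succ n ih =>
    exact ((hl.inv₀ hl0).mul
      (continuousOn_fellerFlux_of_continuousOn hl ih)).continuousOn_integral_Icc

theorem continuousOn_fellerFlux (hl : ContinuousOn l (Icc 0 r))
    (hl0 : ∀ x ∈ Icc 0 r, l x ≠ 0) (n : ℕ) : ContinuousOn (fellerFlux l n) (Icc 0 r) :=
  continuousOn_fellerFlux_of_continuousOn hl (continuousOn_fellerIterate hl hl0 n)

theorem abs_integral_two_mul_mul_le {f : ℝ → ℝ} {A : ℝ} {k : ℕ} (hlo : 0 < lo)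
    (hbd : ∀ x ∈ Icc (0:ℝ) r, lo ≤ l x ∧ l x ≤ hi)
    (hf : ∀ t ∈ Icc (0:ℝ) r, |f t| ≤ A * t ^ k / k !) {x : ℝ} (hx : x ∈ Icc (0:ℝ) r) :
    |∫ t in (0:ℝ)..x, 2 * l t * f t| ≤ 2 * hi * A * x ^ (k + 1) / (k + 1)! := by
  refine abs_intervalIntegral_le_mul_pow_div_factorial hx.1 fun t ht => ?_
  have htr : t ∈ Icc (0:ℝ) r := ⟨ht.1.le, ht.2.trans hx.2⟩
  obtain ⟨hlot, hhit⟩ := hbd t htr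
  calc |2 * l t * f t| = 2 * l t * |f t| := by
        rw [abs_mul, abs_of_pos (by linarith : 0 < 2 * l t)]
    _ ≤ 2 * hi * (A * t ^ k / k !) := by
        gcongr
        · linarith
        · exact hf t htr
    _ = 2 * hi * A * t ^ k / k ! := by ring

theorem abs_fellerIterate_le (hlo : 0 < lo) (hbd : ∀ x ∈ Icc (0:ℝ) r, lo ≤ l x ∧ l x ≤ hi)
    (n : ℕ) {x : ℝ} (hx : x ∈ Icc (0:ℝ) r) :
    |fellerIterate l n x| ≤ (2 * hi / lo) ^ n * x ^ (2 * n) / (2 * n)! := by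
  induction n generalizing x with
  | zero => simp [fellerIterate]
  | succ n ih =>
    rw [fellerIterate_succ, show 2 * (n + 1) = 2 * n + 1 + 1 by ring]
    refine abs_intervalIntegral_le_mul_pow_div_factorial hx.1 fun y hy => ?_
    have hyr : y ∈ Icc (0:ℝ) r := ⟨hy.1.le, hy.2.trans hx.2⟩
    have hlo_y := (hbd y hyr).1
    have hflux := abs_integral_two_mul_mul_le hlo hbd (fun t ht => ih ht) hyr
    calc |(l y)⁻¹ * fellerFlux l n y| = (l y)⁻¹ * |fellerFlux l n y| := by
          rw [abs_mul, abs_of_pos (inv_pos.2 (hlo.trans_le hlo_y))]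
      _ ≤ lo⁻¹ * (2 * hi * (2 * hi / lo) ^ n * y ^ (2 * n + 1) / (2 * n + 1)!) := by
          gcongr
          exact hflux
      _ = (2 * hi / lo) ^ (n + 1) * y ^ (2 * n + 1) / (2 * n + 1)! := by
          ring

theorem abs_fellerIterate_le_uniform (hlo : 0 < lo)
    (hbd : ∀ x ∈ Icc (0:ℝ) r, lo ≤ l x ∧ l x ≤ hi) (n : ℕ) {x : ℝ} (hx : x ∈ Icc (0:ℝ) r) :
    |fellerIterate l n x| ≤ (2 * hi * r ^ 2 / lo) ^ n / n ! := by
  have : 0 ≤ hi := (hlo.trans_le ((hbd x hx).1.trans (hbd x hx).2)).le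
  calc |fellerIterate l n x| ≤ (2 * hi / lo) ^ n * x ^ (2 * n) / (2 * n)! :=
        abs_fellerIterate_le hlo hbd n hx
    _ ≤ (2 * hi / lo) ^ n * r ^ (2 * n) / n ! :=
        mul_pow_div_factorial_le (by positivity) hx (by omega)
    _ = (2 * hi * r ^ 2 / lo) ^ n / n ! := by ring

theorem abs_fellerFlux_le_uniform (hlo : 0 < lo)
    (hbd : ∀ x ∈ Icc (0:ℝ) r, lo ≤ l x ∧ l x ≤ hi) (n : ℕ) {x : ℝ} (hx : x ∈ Icc (0:ℝ) r) :
    |fellerFlux l n x| ≤ 2 * hi * r * ((2 * hi * r ^ 2 / lo) ^ n / n !) := by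
  have : 0 ≤ hi := (hlo.trans_le ((hbd x hx).1.trans (hbd x hx).2)).le
  calc |fellerFlux l n x| ≤ 2 * hi * (2 * hi / lo) ^ n * x ^ (2 * n + 1) / (2 * n + 1)! :=
        abs_integral_two_mul_mul_le hlo hbd (fun t ht => abs_fellerIterate_le hlo hbd n ht) hx
    _ ≤ 2 * hi * (2 * hi / lo) ^ n * r ^ (2 * n + 1) / n ! :=
        mul_pow_div_factorial_le (by positivity) hx (by omega)
    _ = 2 * hi * r * ((2 * hi * r ^ 2 / lo) ^ n / n !) := by ring

theorem summable_fellerSeries (hlo : 0 < lo) (hbd : ∀ x ∈ Icc (0:ℝ) r, lo ≤ l x ∧ l x ≤ hi)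
    (lam : ℝ) {x : ℝ} (hx : x ∈ Icc (0:ℝ) r) :
    Summable fun n => lam ^ n * fellerIterate l n x :=
  ((Real.summable_pow_div_factorial _).mul_left 1).of_norm_bounded fun n =>
    norm_pow_mul_le ((abs_fellerIterate_le_uniform hlo hbd n hx).trans_eq (one_mul _).symm)

theorem continuousOn_fellerSeries (hl : ContinuousOn l (Icc 0 r)) (hlo : 0 < lo)
    (hbd : ∀ x ∈ Icc (0:ℝ) r, lo ≤ l x ∧ l x ≤ hi) (lam : ℝ) :
    ContinuousOn (fellerSeries l lam) (Icc 0 r) :=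
  continuousOn_tsum
    (fun n => continuousOn_const.mul
      (continuousOn_fellerIterate hl (ne_zero_of_pos_le hlo hbd) n))
    ((Real.summable_pow_div_factorial _).mul_left 1) fun n _ hx =>
    norm_pow_mul_le ((abs_fellerIterate_le_uniform hlo hbd n hx).trans_eq (one_mul _).symm)

theorem fellerSeries_eq_one_add_integral (hl : ContinuousOn l (Icc 0 r)) (hlo : 0 < lo)
    (hbd : ∀ x ∈ Icc (0:ℝ) r, lo ≤ l x ∧ l x ≤ hi) (lam : ℝ) {x : ℝ} (hx : x ∈ Icc (0:ℝ) r) :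
    fellerSeries l lam x = 1 + ∫ y in (0:ℝ)..x, (l y)⁻¹ * fellerFluxSeries l lam y := by
  have hl0 := ne_zero_of_pos_le hlo hbd
  have hterms : HasSum (fun n => ∫ y in (0:ℝ)..x, lam ^ (n + 1) * ((l y)⁻¹ * fellerFlux l n y))
      (∫ y in (0:ℝ)..x, ∑' n : ℕ, lam ^ (n + 1) * ((l y)⁻¹ * fellerFlux l n y)) := by
    refine hasSum_intervalIntegral_of_norm_le (uIcc_subset_Icc ⟨le_rfl, hx.1.trans hx.2⟩ hx)
      (fun n => continuousOn_const.mul ((hl.inv₀ hl0).mul (continuousOn_fellerFlux hl hl0 n)))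
      ((Real.summable_pow_div_factorial (|lam| * (2 * hi * r ^ 2 / lo))).mul_left
        (|lam| * (lo⁻¹ * (2 * hi * r)))) fun n y hy => ?_
    rw [pow_succ, mul_assoc]
    refine norm_pow_mul_le ?_
    obtain ⟨hlo_y, -⟩ := hbd y hy
    calc |lam * ((l y)⁻¹ * fellerFlux l n y)| = |lam| * ((l y)⁻¹ * |fellerFlux l n y|) := by
          rw [abs_mul, abs_mul, abs_of_pos (inv_pos.2 (hlo.trans_le hlo_y))]
      _ ≤ |lam| * (lo⁻¹ * (2 * hi * r * ((2 * hi * r ^ 2 / lo) ^ n / n !))) := by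
          gcongr
          exact abs_fellerFlux_le_uniform hlo hbd n hy
      _ = |lam| * (lo⁻¹ * (2 * hi * r)) * ((2 * hi * r ^ 2 / lo) ^ n / n !) := by ring
  have hintegrand : ∀ y, (l y)⁻¹ * fellerFluxSeries l lam y =
      ∑' n : ℕ, lam ^ (n + 1) * ((l y)⁻¹ * fellerFlux l n y) := fun y => by
    simp_rw [fellerFluxSeries, ← tsum_mul_left, mul_left_comm]
  rw [fellerSeries, (summable_fellerSeries hlo hbd lam hx).tsum_eq_zero_add]
  simp_rw [hintegrand, ← hterms.tsum_eq, intervalIntegral.integral_const_mul, ← fellerIterate_succ]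
  simp [fellerIterate]

theorem fellerFluxSeries_eq_integral (hl : ContinuousOn l (Icc 0 r)) (hlo : 0 < lo)
    (hbd : ∀ x ∈ Icc (0:ℝ) r, lo ≤ l x ∧ l x ≤ hi) (lam : ℝ) {x : ℝ} (hx : x ∈ Icc (0:ℝ) r) :
    fellerFluxSeries l lam x = ∫ y in (0:ℝ)..x, 2 * lam * l y * fellerSeries l lam y := by
  have hl0 := ne_zero_of_pos_le hlo hbd
  have hterms : HasSum (fun n => ∫ y in (0:ℝ)..x, lam ^ (n + 1) * (2 * l y * fellerIterate l n y))
      (∫ y in (0:ℝ)..x, ∑' n : ℕ, lam ^ (n + 1) * (2 * l y * fellerIterate l n y)) := by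
    refine hasSum_intervalIntegral_of_norm_le (uIcc_subset_Icc ⟨le_rfl, hx.1.trans hx.2⟩ hx)
      (fun n => continuousOn_const.mul
        ((continuousOn_const.mul hl).mul (continuousOn_fellerIterate hl hl0 n)))
      ((Real.summable_pow_div_factorial (|lam| * (2 * hi * r ^ 2 / lo))).mul_left
        (|lam| * (2 * hi))) fun n y hy => ?_
    rw [pow_succ, mul_assoc]
    refine norm_pow_mul_le ?_
    obtain ⟨hlo_y, hhi_y⟩ := hbd y hy
    calc |lam * (2 * l y * fellerIterate l n y)| = |lam| * (2 * l y * |fellerIterate l n y|) := by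
          rw [abs_mul, abs_mul, abs_of_pos (by linarith : 0 < 2 * l y)]
      _ ≤ |lam| * (2 * hi * ((2 * hi * r ^ 2 / lo) ^ n / n !)) := by
          gcongr
          · linarith
          · exact abs_fellerIterate_le_uniform hlo hbd n hy
      _ = |lam| * (2 * hi) * ((2 * hi * r ^ 2 / lo) ^ n / n !) := by ring
  have hintegrand : ∀ y, 2 * lam * l y * fellerSeries l lam y =
      ∑' n : ℕ, lam ^ (n + 1) * (2 * l y * fellerIterate l n y) := fun y => by
    rw [fellerSeries, ← tsum_mul_left]
    exact tsum_congr fun n => by ring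
  simp_rw [fellerFluxSeries, hintegrand, ← hterms.tsum_eq, intervalIntegral.integral_const_mul]
  rfl

end Feller

theorem fellerSeries_solves_SturmLiouville_general
    (r lo hi : ℝ) (hr : 0 < r) (hlo : 0 < lo)
    (l : ℝ → ℝ) (hl : ContinuousOn l (Set.Icc 0 r))
    (hbd : ∀ x ∈ Set.Icc (0:ℝ) r, lo ≤ l x ∧ l x ≤ hi) (lam : ℝ) :
    let U : ℝ → ℝ := fun x => ∑' n : ℕ, lam ^ n * fellerIterate l n x
    let U' : ℝ → ℝ := fun x =>
      (l x)⁻¹ * ∑' n : ℕ, lam ^ (n + 1) * ∫ y in (0:ℝ)..x, 2 * l y * fellerIterate l n y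
    (∀ x ∈ Set.Icc (0:ℝ) r, HasDerivWithinAt U (U' x) (Set.Icc 0 r) x) ∧
    ContinuousOn U' (Set.Icc 0 r) ∧
    (∀ x ∈ Set.Icc (0:ℝ) r,
      l x * U' x = ∑' n : ℕ, lam ^ (n + 1) * ∫ y in (0:ℝ)..x, 2 * l y * fellerIterate l n y) ∧
    (∀ x ∈ Set.Ioo (0:ℝ) r, HasDerivAt (fun z => l z * U' z) (2 * lam * l x * U x) x) ∧
    U 0 = 1 ∧ l 0 * U' 0 = 0 := by
  intro U U'
  have hl0 := ne_zero_of_pos_le hlo hbd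
  have h0 : (0:ℝ) ∈ Icc 0 r := left_mem_Icc.2 hr.le
  have hU := fun x (hx : x ∈ Icc 0 r) => fellerSeries_eq_one_add_integral hl hlo hbd lam hx
  have hG := fun x (hx : x ∈ Icc 0 r) => fellerFluxSeries_eq_integral hl hlo hbd lam hx
  have hlU' : ∀ x ∈ Icc 0 r, l x * U' x = fellerFluxSeries l lam x :=
    fun x hx => mul_inv_cancel_left₀ (hl0 x hx) _
  have hsource : ContinuousOn (fun y => 2 * lam * l y * fellerSeries l lam y) (Icc 0 r) :=
    (continuousOn_const.mul hl).mul (continuousOn_fellerSeries hl hlo hbd lam)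
  have hU'c : ContinuousOn U' (Icc 0 r) :=
    (hl.inv₀ hl0).mul (hsource.continuousOn_integral_Icc.congr hG)
  refine ⟨fun x hx => ?_, hU'c, hlU', fun x hx => ?_, ?_, ?_⟩
  · exact ((hU'c.hasDerivWithinAt_integral_Icc hx).const_add 1).congr hU (hU x hx)
  · have hnhds : Icc 0 r ∈ 𝓝 x := Icc_mem_nhds hx.1 hx.2
    exact ((hsource.hasDerivWithinAt_integral_Icc (Ioo_subset_Icc_self hx)).hasDerivAt
      hnhds).congr_of_eventuallyEq
      (eventually_of_mem hnhds fun z hz => (hlU' z hz).trans (hG z hz))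
  · exact (hU 0 h0).trans (by rw [intervalIntegral.integral_same, add_zero])
  · rw [hlU' 0 h0, hG 0 h0, intervalIntegral.integral_same]

/-- `u(x,λ) = Σ λⁿ u⁽ⁿ⁾(x)` is continuously differentiable on `[0,r]` with
`l(x) ∂ₓu(x,λ) = Σ λ^{n+1} ∫₀ˣ 2 l(y) u⁽ⁿ⁾(y) dy`; moreover `x ↦ l(x) ∂ₓu(x,λ)` is
differentiable on `(0,r)` with derivative `2λ l(x) u(x,λ)`, so that `u(·,λ)` solves the
Sturm–Liouville equation `(l u')' = 2λ l u` with `u(0,λ) = 1`, `l(0) ∂ₓu(0,λ) = 0`. -/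
theorem fellerSeries_solves_SturmLiouville
    (r lo hi : ℝ) (hr : 0 < r) (hlo : 0 < lo) (hlohi : lo ≤ hi)
    (l : ℝ → ℝ) (hl : ContinuousOn l (Set.Icc 0 r))
    (hbd : ∀ x ∈ Set.Icc (0:ℝ) r, lo ≤ l x ∧ l x ≤ hi) (lam : ℝ) :
    let U : ℝ → ℝ := fun x => ∑' n : ℕ, lam ^ n * fellerIterate l n x
    let U' : ℝ → ℝ := fun x =>
      (l x)⁻¹ * ∑' n : ℕ, lam ^ (n + 1) * ∫ y in (0:ℝ)..x, 2 * l y * fellerIterate l n y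
    (∀ x ∈ Set.Icc (0:ℝ) r, HasDerivWithinAt U (U' x) (Set.Icc 0 r) x) ∧
    ContinuousOn U' (Set.Icc 0 r) ∧
    (∀ x ∈ Set.Icc (0:ℝ) r,
      l x * U' x = ∑' n : ℕ, lam ^ (n + 1) * ∫ y in (0:ℝ)..x, 2 * l y * fellerIterate l n y) ∧
    (∀ x ∈ Set.Ioo (0:ℝ) r, HasDerivAt (fun z => l z * U' z) (2 * lam * l x * U x) x) ∧
    U 0 = 1 ∧ l 0 * U' 0 = 0 :=
  fellerSeries_solves_SturmLiouville_general r lo hi hr hlo l hl hbd lam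
end

section
/- Suppose μ : (−∞,0] → ℝ is convex, μ(0) = 0, μ is continuous at 0 (from the left), and μ is unbounded below on (−∞,0]. Then lim_{a→0⁺} I(a) = +∞ and lim_{a→+∞} I(a) = 0. -/
/-!
Near `a = 0` the transform is at least `-μ(λ) + aλ` for each fixed `λ ≤ 0`, and `-μ` is unbounded
above. For large `a` only `λ` near `0` matter: if `μ > -ε` on `(y, 0]`, convexity with
`μ 0 = 0` gives `μ λ ≥ λ · μ(y)/y` for `λ ≤ y`, so `aλ - μ λ ≤ 0` there once `a ≥ μ(y)/y`, while on
`(y, 0]` we have `aλ - μ λ < ε`.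
-/

open Set Filter

/-- The Legendre-type transform `I(a) = sup_{λ ≤ 0} (aλ − μ(λ))`, valued in `EReal`. -/
noncomputable def legendreNeg (μ : ℝ → ℝ) (a : ℝ) : EReal :=
  ⨆ lam ∈ Set.Iic (0:ℝ), ((a * lam - μ lam : ℝ) : EReal)

open Topology

theorem ConvexOn.mul_div_le_of_le_of_neg {s : Set ℝ} {f : ℝ → ℝ} (hf : ConvexOn ℝ s f)
    (hs : 0 ∈ s) (hf0 : f 0 = 0) {x y : ℝ} (hx : x ∈ s) (hy : y ∈ s) (hxy : x ≤ y)
    (hy0 : y < 0) : x * (f y / y) ≤ f x := by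
  have hslope := hf.secant_mono hs hx hy (hxy.trans_lt hy0).ne hy0.ne hxy
  simp only [hf0, sub_zero] at hslope
  rwa [div_le_iff_of_neg (hxy.trans_lt hy0), mul_comm] at hslope

namespace legendreNeg

variable {μ : ℝ → ℝ} {a : ℝ}

theorem coe_le {lam : ℝ} (hlam : lam ≤ 0) :
    ((a * lam - μ lam : ℝ) : EReal) ≤ legendreNeg μ a :=
  le_iSup₂ (f := fun lam (_ : lam ∈ Iic (0 : ℝ)) => ((a * lam - μ lam : ℝ) : EReal)) lam hlam

theorem le_coe {b : ℝ} (h : ∀ lam ≤ 0, a * lam - μ lam ≤ b) : legendreNeg μ a ≤ b :=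
  iSup₂_le fun lam hlam => EReal.coe_le_coe_iff.2 (h lam hlam)

theorem nonneg (h0 : μ 0 ≤ 0) (a : ℝ) : 0 ≤ legendreNeg μ a :=
  (EReal.coe_nonneg.2 (by simpa using h0)).trans (coe_le le_rfl)

theorem tendsto_nhds_zero_top (hunb : ∀ M : ℝ, ∃ lam ≤ (0 : ℝ), μ lam < M) :
    Tendsto (legendreNeg μ) (𝓝 0) (𝓝 ⊤) := by
  rw [EReal.tendsto_nhds_top_iff_real]
  intro M
  obtain ⟨lam, hlam, hμ⟩ := hunb (-M)
  have hlim : Tendsto (fun a : ℝ => a * lam - μ lam) (𝓝 0) (𝓝 (-μ lam)) :=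
    (continuous_mul_const lam |>.sub continuous_const).tendsto' 0 _ (by simp)
  filter_upwards [hlim.eventually (lt_mem_nhds (by linarith : M < -μ lam))] with a ha
  exact (EReal.coe_lt_coe_iff.2 ha).trans_le (coe_le hlam)

theorem le_of_convexOn (hconv : ConvexOn ℝ (Iic 0) μ) (h0 : μ 0 = 0) {y ε : ℝ} (hy : y < 0)
    (hε : ∀ lam ∈ Ioc y 0, -ε ≤ μ lam) (ha0 : 0 ≤ a) (ha : μ y / y ≤ a) :
    legendreNeg μ a ≤ ε := by
  have hε0 : 0 ≤ ε := by linarith [hε 0 ⟨hy, le_rfl⟩]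
  refine le_coe fun lam hlam => ?_
  rcases le_or_gt lam y with hlamy | hylam
  · have hμ := hconv.mul_div_le_of_le_of_neg self_mem_Iic h0 hlam hy.le hlamy hy
    nlinarith [mul_le_mul_of_nonpos_left ha hlam]
  · nlinarith [hε lam ⟨hylam, hlam⟩]

theorem tendsto_atTop_zero (hconv : ConvexOn ℝ (Iic 0) μ) (h0 : μ 0 = 0)
    (hcont : ContinuousWithinAt μ (Iic 0) 0) :
    Tendsto (legendreNeg μ) atTop (𝓝 0) := by
  refine tendsto_order.2 ⟨fun b hb => .of_forall fun a => hb.trans_le (nonneg h0.le a),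
    fun b hb => ?_⟩
  obtain ⟨ε, hε0, hεb⟩ := EReal.exists_between_coe_real hb
  have hnear : ∀ᶠ lam in 𝓝[≤] 0, -ε < μ lam :=
    hcont.eventually (lt_mem_nhds (by rw [h0]; exact neg_lt_zero.2 (EReal.coe_pos.1 hε0)))
  obtain ⟨y, hy, hyε⟩ := mem_nhdsLE_iff_exists_Ioc_subset.1 hnear
  filter_upwards [eventually_ge_atTop 0, eventually_ge_atTop (μ y / y)] with a ha0 ha
  exact (le_of_convexOn hconv h0 hy (fun lam hlam => (hyε hlam).le) ha0 ha).trans_lt hεb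

end legendreNeg

/-- If `μ` is convex on `(−∞,0]`, `μ(0)=0`, `μ` is left-continuous at `0`, and `μ` is unbounded
below on `(−∞,0]`, then `I(a) → +∞` as `a → 0⁺` and `I(a) → 0` as `a → +∞`. -/
theorem legendreNeg_limits (μ : ℝ → ℝ)
    (hconv : ConvexOn ℝ (Set.Iic (0:ℝ)) μ)
    (h0 : μ 0 = 0)
    (hcont : ContinuousWithinAt μ (Set.Iic 0) 0)
    (hunb : ∀ M : ℝ, ∃ lam ≤ (0:ℝ), μ lam < M) :
    Filter.Tendsto (legendreNeg μ) (nhdsWithin 0 (Set.Ioi 0)) (nhds (⊤ : EReal)) ∧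
    Filter.Tendsto (legendreNeg μ) Filter.atTop (nhds (0 : EReal)) :=
  ⟨(legendreNeg.tendsto_nhds_zero_top hunb).mono_left nhdsWithin_le_nhds,
    legendreNeg.tendsto_atTop_zero hconv h0 hcont⟩
end
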